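/- Let 𝒫 be a configuration of n points in general position in the plane whose convex hull has size k. Let Q_1, ..., Q_k be k points of 𝒫 in convex position, listed in their cyclic order, which are not exactly the k vertices of the convex hull of 𝒫. Then n(Q_1,Q_2) + n(Q_2,Q_3) + ... + n(Q_{k−1},Q_k) + n(Q_k,Q_1) < n² − (k+1)n + k. -/

import Mathlib

open scoped Classical

noncomputable section

/-- The set Pts is in general position: no three distinct points are collinear. -/
def GenPos (Pts : Finset (ℝ × ℝ)) : Prop :=
  ∀ A ∈ Pts, ∀ B ∈ Pts, ∀ C ∈ Pts, A ≠ B → A ≠ C → B ≠ C →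
    ¬ Collinear ℝ ({A, B, C} : Set (ℝ × ℝ))

/-- `sepCount Pts P Q` is the number of unordered pairs `{R, S}` of points of `Pts \ {P, Q}`
such that the line through `R` and `S` strictly separates `P` and `Q`. -/
def sepCount (Pts : Finset (ℝ × ℝ)) (P Q : ℝ × ℝ) : ℕ :=
  ((Finset.powersetCard 2 (Pts \ {P, Q})).filter
    (fun s => (affineSpan ℝ (↑s : Set (ℝ × ℝ))).SOppSide P Q)).card

/-- The vertices of the convex hull of `Pts` (its extreme points). -/
def hullVertices (Pts : Finset (ℝ × ℝ)) : Set (ℝ × ℝ) :=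
  Set.extremePoints ℝ (convexHull ℝ (↑Pts : Set (ℝ × ℝ)))

/-- `Q : ZMod k → ℝ × ℝ` lists the points of `S` in convex position, in cyclic order:
`Q` is an injective enumeration of `S` and, for every `i`, all points of `S` other than
`Q i` and `Q (i+1)` lie strictly on the same side of the line through `Q i` and `Q (i+1)`
(i.e. each consecutive pair spans an edge of the convex hull of `S`). -/
def IsConvexCycle (k : ℕ) (S : Set (ℝ × ℝ)) (Q : ZMod k → ℝ × ℝ) : Prop :=
  Function.Injective Q ∧ Set.range Q = S ∧
    ∀ i : ZMod k, ∀ x ∈ S, ∀ y ∈ S,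
      x ∉ ({Q i, Q (i + 1)} : Set (ℝ × ℝ)) → y ∉ ({Q i, Q (i + 1)} : Set (ℝ × ℝ)) →
        (affineSpan ℝ ({Q i, Q (i + 1)} : Set (ℝ × ℝ))).SSameSide x y

/-! The cyclic sum counts pairs (line `RS`, edge `Q i Q (i+1)`) in which the line strictly
separates the endpoints of the edge, so it equals the sum over pairs `{R, S} ⊆ 𝒫` of the number
of polygon edges crossed by the line `RS`. A line crosses a convex polygon at most twice, and
each polygon vertex lying on the line uses up one crossing; hence every pair contributes at most
`2 - #({R, S} ∩ {Q i})`, and these bounds add up to `n(n-1) - k(n-1) = n² - (k+1)n + k`.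
The inequality is strict because some hull vertex `v` is not a `Q i`: it lies outside the
polygon, and the tangent line from `v` to the polygon through a vertex `Q j` crosses no edge.

The crossing bound holds because, for an affine function `f` such as `orient R S`, the values
of `f` at the vertices of a convex polygon never alternate `+ - + -` in cyclic order: the four
values satisfy a linear relation whose coefficients are areas of positively oriented triangles. -/

open Finset

lemma mul_pos_of_mul_pos_of_mul_pos {a b c : ℝ} (hab : 0 < a * b) (hbc : 0 < b * c) :
    0 < a * c := by
  nlinarith [mul_pos hab hbc, sq_nonneg b]

def cross (u v : ℝ × ℝ) : ℝ := u.1 * v.2 - u.2 * v.1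

def orient (a b c : ℝ × ℝ) : ℝ := cross (b - a) (c - a)

lemma orient_rotate (a b c : ℝ × ℝ) : orient a b c = orient b c a := by
  simp only [orient, cross, Prod.fst_sub, Prod.snd_sub]; ring

lemma orient_self_left (a b : ℝ × ℝ) : orient a b a = 0 := by
  simp [orient, cross]

lemma orient_self_right (a b : ℝ × ℝ) : orient a b b = 0 := by
  simp only [orient, cross, Prod.fst_sub, Prod.snd_sub]; ring

lemma cross_eq_zero_iff {u v : ℝ × ℝ} (hu : u ≠ 0) : cross u v = 0 ↔ ∃ r : ℝ, r • u = v := by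
  constructor
  swap
  · rintro ⟨r, rfl⟩
    simp only [cross, Prod.smul_fst, Prod.smul_snd, smul_eq_mul]; ring
  intro h
  have hnorm : u.1 ^ 2 + u.2 ^ 2 ≠ 0 := by
    contrapose! hu
    have h1 : u.1 = 0 := by nlinarith [sq_nonneg u.1, sq_nonneg u.2]
    have h2 : u.2 = 0 := by nlinarith [sq_nonneg u.1, sq_nonneg u.2]
    exact Prod.ext h1 h2
  -- a vector parallel to `u` is its own projection onto `u`
  simp only [cross] at h
  refine ⟨(u.1 * v.1 + u.2 * v.2) / (u.1 ^ 2 + u.2 ^ 2), Prod.ext ?_ ?_⟩ <;>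
    simp only [Prod.smul_fst, Prod.smul_snd, smul_eq_mul] <;> field_simp
  · linear_combination u.2 * h
  · linear_combination -u.1 * h

lemma mem_affineSpan_pair_iff_orient_eq_zero {a b x : ℝ × ℝ} (hab : a ≠ b) :
    x ∈ line[ℝ, a, b] ↔ orient a b x = 0 := by
  rw [orient, cross_eq_zero_iff (sub_ne_zero.2 hab.symm), ← vsub_eq_sub x a, ← vsub_eq_sub b a,
    ← vadd_left_mem_affineSpan_pair, vsub_vadd]

lemma cross_mul_cross_nonneg_of_sameRay (w : ℝ × ℝ) {u v : ℝ × ℝ} (h : SameRay ℝ u v) :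
    0 ≤ cross w u * cross w v := by
  obtain ⟨z, s, t, hs, ht, -, rfl, rfl⟩ := h.exists_eq_smul
  have : cross w (s • z) * cross w (t • z) = s * t * cross w z ^ 2 := by
    simp only [cross, Prod.smul_fst, Prod.smul_snd, smul_eq_mul]; ring
  rw [this]
  positivity

lemma orient_mul_orient_neg_of_sOppSide {a b x y : ℝ × ℝ} (hab : a ≠ b)
    (h : line[ℝ, a, b].SOppSide x y) : orient a b x * orient a b y < 0 := by
  obtain ⟨hx, hy, p, hp, hray⟩ :=
    (AffineSubspace.sOppSide_iff_exists_left (left_mem_affineSpan_pair ℝ a b)).1 h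
  rw [mem_affineSpan_pair_iff_orient_eq_zero hab] at hx hy hp
  have hray' := cross_mul_cross_nonneg_of_sameRay (b - a) hray
  have : cross (b - a) (p -ᵥ y) = orient a b p - orient a b y := by
    simp only [orient, cross, vsub_eq_sub, Prod.fst_sub, Prod.snd_sub]; ring
  rw [this, hp, zero_sub, vsub_eq_sub] at hray'
  exact lt_of_le_of_ne (by simpa [orient] using hray') (mul_ne_zero hx hy)

lemma orient_mul_orient_pos_of_sSameSide {a b x y : ℝ × ℝ} (hab : a ≠ b)
    (h : line[ℝ, a, b].SSameSide x y) : 0 < orient a b x * orient a b y := by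
  obtain ⟨hx, hy, p, hp, hray⟩ :=
    (AffineSubspace.sSameSide_iff_exists_left (left_mem_affineSpan_pair ℝ a b)).1 h
  rw [mem_affineSpan_pair_iff_orient_eq_zero hab] at hx hy hp
  have hray' := cross_mul_cross_nonneg_of_sameRay (b - a) hray
  have : cross (b - a) (y -ᵥ p) = orient a b y - orient a b p := by
    simp only [orient, cross, vsub_eq_sub, Prod.fst_sub, Prod.snd_sub]; ring
  rw [this, hp, sub_zero, vsub_eq_sub] at hray'
  exact lt_of_le_of_ne hray' (mul_ne_zero hx hy).symm

lemma sepCount_eq_card_filter (Pts : Finset (ℝ × ℝ)) (P Q : ℝ × ℝ) :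
    sepCount Pts P Q = #((Pts.powersetCard 2).filter
      fun s : Finset (ℝ × ℝ) => (affineSpan ℝ (s : Set (ℝ × ℝ))).SOppSide P Q) := by
  unfold sepCount
  -- `sepCount` filters the pairs after coercing them to sets, i.e. inside an image
  simp only [bind_pure_comp, fmap_def, filter_image]
  refine (card_image_of_injective _ SetLike.coe_injective).trans ?_
  congr 1
  ext s
  simp only [mem_filter, mem_powersetCard, subset_sdiff, disjoint_insert_right,
    disjoint_singleton_right]
  constructor
  · rintro ⟨⟨⟨h, -⟩, h2⟩, hPQ⟩
    exact ⟨⟨h, h2⟩, hPQ⟩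
  · rintro ⟨⟨h, h2⟩, hPQ⟩
    exact ⟨⟨⟨h, fun hP => hPQ.left_notMem (subset_affineSpan ℝ _ hP),
      fun hQ => hPQ.right_notMem (subset_affineSpan ℝ _ hQ)⟩, h2⟩, hPQ⟩

lemma sum_card_inter_powersetCard_two {α : Type*} [DecidableEq α] {A B : Finset α} (hB : B ⊆ A) :
    ∑ s ∈ A.powersetCard 2, #(B ∩ s) = #B * (#A - 1) := by
  refine sum_card_inter fun x hx => ?_
  simpa [singleton_subset_iff] using
    card_filter_powersetCard_subset {x} A 2 (singleton_subset_iff.2 (hB hx)) (by simp)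

lemma exists_orient_nonpos_of_notMem_convexHull {s : Finset (ℝ × ℝ)} (hs : s.Nonempty)
    {v : ℝ × ℝ} (hv : v ∉ convexHull ℝ (s : Set (ℝ × ℝ))) :
    ∃ x ∈ s, ∀ y ∈ s, orient v x y ≤ 0 := by
  obtain ⟨f, u, hfv, hf⟩ := geometric_hahn_banach_point_closed (convex_convexHull ℝ _)
    (s.finite_toSet.isClosed_convexHull ℝ) hv
  set a := f (1, 0)
  set b := f (0, 1)
  have hf_apply (w : ℝ × ℝ) : f w = a * w.1 + b * w.2 := by
    conv_lhs => rw [show w = w.1 • ((1 : ℝ), (0 : ℝ)) + w.2 • ((0 : ℝ), (1 : ℝ)) by simp]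
    simp only [map_add, map_smul, smul_eq_mul]
    ring
  -- in coordinates along `(a, b)` and its normal, `y - v` has abscissa `F y > 0` and slope
  -- `G y / F y`; a point of maximal slope sees all of `s` on one side
  let F (y : ℝ × ℝ) := a * (y.1 - v.1) + b * (y.2 - v.2)
  let G (y : ℝ × ℝ) := a * (y.2 - v.2) - b * (y.1 - v.1)
  have hF : ∀ y ∈ s, 0 < F y := fun y hy => by
    have := hf y (subset_convexHull ℝ _ hy)
    rw [hf_apply] at this hfv
    simp only [F]; linarith
  obtain ⟨x, hx, hmax⟩ := s.exists_max_image (fun y => G y / F y) hs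
  refine ⟨x, hx, fun y hy => ?_⟩
  have hab : 0 < a ^ 2 + b ^ 2 := by
    rcases eq_or_ne a 0 with ha | ha
    · rcases eq_or_ne b 0 with hb | hb
      · simpa [F, ha, hb] using hF x hx
      · positivity
    · positivity
  have key : (a ^ 2 + b ^ 2) * orient v x y = F x * G y - F y * G x := by
    simp only [orient, cross, F, G, Prod.fst_sub, Prod.snd_sub]; ring
  have := hmax y hy
  rw [div_le_div_iff₀ (hF y hy) (hF x hx)] at this
  nlinarith

def NoCyclicAlternation (k : ℕ) (g : ℕ → ℝ) : Prop :=
  ∀ a b c d, a < b → b < c → c < d → d < a + k →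
    0 ≤ g a → g b ≤ 0 → 0 ≤ g c → g d ≤ 0 → g a = 0 ∧ g b = 0 ∧ g c = 0 ∧ g d = 0

def signChanges (k : ℕ) (g : ℕ → ℝ) : Finset ℕ :=
  {i ∈ range k | g i * g (i + 1) < 0}

namespace NoCyclicAlternation

variable {k : ℕ} {g : ℕ → ℝ}

lemma neg (hper : Function.Periodic g k) (hg : NoCyclicAlternation k g) :
    NoCyclicAlternation k (-g) := by
  intro a b c d hab hbc hcd hda ha hb hc hd
  simp only [Pi.neg_apply, neg_nonneg, neg_nonpos, neg_eq_zero] at *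
  -- rotating a pattern `- + - +` by one step gives a pattern `+ - + -`
  obtain ⟨hb0, hc0, hd0, ha0⟩ := hg b c d (a + k) hbc hcd (by omega) (by omega) hb hc hd
    (by rwa [hper])
  exact ⟨by rwa [hper] at ha0, hb0, hc0, hd0⟩

end NoCyclicAlternation

section SignChanges

variable {k : ℕ} {g : ℕ → ℝ}

lemma mem_signChanges {i : ℕ} : i ∈ signChanges k g ↔ i < k ∧ g i * g (i + 1) < 0 := by
  simp [signChanges]

lemma card_signChanges_eq_card_Ico (hper : Function.Periodic g k) (m : ℕ) :
    #(signChanges k g) = #{i ∈ Ico m (m + k) | g i * g (i + 1) < 0} := by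
  have hP : Function.Periodic (fun i => g i * g (i + 1) < 0) k := fun i => by
    simp only [hper i, add_right_comm i k 1, hper (i + 1)]
  rw [Nat.filter_Ico_card_eq_of_periodic _ _ _ hP, Nat.count_eq_card_filter_range]
  rfl

lemma exists_pos_of_mul_neg {j : ℕ} (h : g j * g (j + 1) < 0) :
    ∃ x, j ≤ x ∧ x ≤ j + 1 ∧ 0 < g x := by
  rcases lt_or_ge 0 (g j) with hj | hj
  · exact ⟨j, le_rfl, by omega, hj⟩
  · exact ⟨j + 1, by omega, le_rfl, pos_of_mul_neg_right h hj⟩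

lemma exists_neg_of_mul_neg {j : ℕ} (h : g j * g (j + 1) < 0) :
    ∃ x, j ≤ x ∧ x ≤ j + 1 ∧ g x < 0 := by
  obtain ⟨x, hjx, hxj, hx⟩ := exists_pos_of_mul_neg (g := -g) (by simpa using h)
  exact ⟨x, hjx, hxj, by simpa using hx⟩

variable (hper : Function.Periodic g k) (hg : NoCyclicAlternation k g)
include hper hg

lemma not_three_sign_changes {i j l : ℕ} (hij : i < j) (hjl : j < l) (hli : l < i + k)
    (hi : g i * g (i + 1) < 0) (hj : g j * g (j + 1) < 0) (hl : g l * g (l + 1) < 0) : False := by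
  wlog hpos : 0 < g i generalizing g
  · exact this (hper.comp Neg.neg) (hg.neg hper) (by simpa using hi) (by simpa using hj)
      (by simpa using hl) (neg_pos.2 ((not_lt.1 hpos).lt_of_ne (left_ne_zero_of_mul hi.ne)))
  have hi1 : g (i + 1) < 0 := neg_of_mul_neg_right hi hpos.le
  obtain ⟨x, hjx, hxj, hx⟩ := exists_pos_of_mul_neg hj
  obtain ⟨y, hly, hyl, hy⟩ := exists_neg_of_mul_neg hl
  have hxi : x ≠ i + 1 := by rintro rfl; linarith
  have hxy : x ≠ y := by rintro rfl; linarith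
  have hyi : y ≠ i + k := by rintro rfl; rw [hper] at hy; linarith
  exact hpos.ne' (hg i (i + 1) x y (by omega) (by omega) (by omega) (by omega)
    hpos.le hi1.le hx.le hy.le).1

lemma card_signChanges_le_two : #(signChanges k g) ≤ 2 := by
  by_contra! h
  let e := (signChanges k g).orderEmbOfFin rfl
  have mem (t : Fin #(signChanges k g)) : e t < k ∧ g (e t) * g (e t + 1) < 0 :=
    mem_signChanges.1 ((signChanges k g).orderEmbOfFin_mem rfl t)
  let t₀ : Fin #(signChanges k g) := ⟨0, by omega⟩
  let t₁ : Fin #(signChanges k g) := ⟨1, by omega⟩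
  let t₂ : Fin #(signChanges k g) := ⟨2, h⟩
  have h₂ : e t₂ < e t₀ + k := by have := (mem t₂).1; omega
  exact not_three_sign_changes hper hg (e.strictMono (Fin.mk_lt_mk.2 zero_lt_one : t₀ < t₁))
    (e.strictMono (Fin.mk_lt_mk.2 one_lt_two : t₁ < t₂)) h₂ (mem t₀).2 (mem t₁).2 (mem t₂).2

lemma not_two_sign_changes_of_eq_zero {m i j : ℕ} (hm : g m = 0) (hmi : m < i) (hij : i < j)
    (hjm : j + 1 < m + k) (hi : g i * g (i + 1) < 0) (hj : g j * g (j + 1) < 0) : False := by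
  wlog hpos : 0 < g i generalizing g
  · exact this (hper.comp Neg.neg) (hg.neg hper) (by simpa using hm) (by simpa using hi)
      (by simpa using hj) (neg_pos.2 ((not_lt.1 hpos).lt_of_ne (left_ne_zero_of_mul hi.ne)))
  have hi1 : g (i + 1) < 0 := neg_of_mul_neg_right hi hpos.le
  obtain ⟨x, hjx, hxj, hx⟩ := exists_pos_of_mul_neg hj
  have hxi : x ≠ i + 1 := by rintro rfl; linarith
  exact hpos.ne' (hg i (i + 1) x (m + k) (by omega) (by omega) (by omega) (by omega)
    hpos.le hi1.le hx.le (by rw [hper, hm])).1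

lemma not_sign_change_of_eq_zero_of_eq_zero {m m' i : ℕ} (hm : g m = 0) (hm' : g m' = 0)
    (hmm' : m < m') (hm'm : m' < m + k) (hmi : m < i) (him : i + 1 < m + k)
    (hi : g i * g (i + 1) < 0) : False := by
  wlog hpos : 0 < g i generalizing g
  · exact this (hper.comp Neg.neg) (hg.neg hper) (by simpa using hm) (by simpa using hm')
      (by simpa using hi) (neg_pos.2 ((not_lt.1 hpos).lt_of_ne (left_ne_zero_of_mul hi.ne)))
  have hi1 : g (i + 1) < 0 := neg_of_mul_neg_right hi hpos.le
  have him' : i ≠ m' := by rintro rfl; simp [hm'] at hpos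
  have hi1m' : i + 1 ≠ m' := by rintro rfl; simp [hm'] at hi1
  have hmk : g (m + k) = 0 := by rw [hper, hm]
  rcases lt_or_gt_of_ne him' with h | h
  · exact hpos.ne' (hg i (i + 1) m' (m + k) (by omega) (by omega) (by omega) (by omega)
      hpos.le hi1.le hm'.ge hmk.le).1
  · exact hpos.ne' (hg i (i + 1) (m + k) (m' + k) (by omega) (by omega) (by omega) (by omega)
      hpos.le hi1.le hmk.ge (by rw [hper, hm'])).1

lemma card_signChanges_le_one {m : ℕ} (hm : g m = 0) : #(signChanges k g) ≤ 1 := by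
  rw [card_signChanges_eq_card_Ico hper m]
  by_contra! h
  obtain ⟨i, hi, j, hj, hij⟩ := one_lt_card.1 h
  simp only [mem_filter, mem_Ico] at hi hj
  wlog hlt : i < j generalizing i j
  · exact this j i hij.symm hj hi (by omega)
  have hmi : m ≠ i := by rintro rfl; simp [hm] at hi
  have hjm : j + 1 ≠ m + k := by intro h; simp [h, hper m, hm] at hj
  exact not_two_sign_changes_of_eq_zero hper hg hm (by omega) hlt (by omega) hi.2 hj.2

lemma signChanges_eq_empty {m m' : ℕ} (hm : g m = 0) (hm' : g m' = 0) (hmm' : m < m')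
    (hm'm : m' < m + k) : signChanges k g = ∅ := by
  rw [← card_eq_zero, card_signChanges_eq_card_Ico hper m, card_eq_zero, filter_eq_empty_iff]
  intro i hi hchange
  rw [mem_Ico] at hi
  have hmi : m ≠ i := by rintro rfl; simp [hm] at hchange
  have him : i + 1 ≠ m + k := by intro h; simp [h, hper m, hm] at hchange
  exact not_sign_change_of_eq_zero_of_eq_zero hper hg hm hm' hmm' hm'm (by omega) (by omega)
    hchange

end SignChanges

lemma sum_sepCount_eq_sum_card_sOppSide (Pts : Finset (ℝ × ℝ)) (k : ℕ) (q : ℕ → ℝ × ℝ) :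
    ∑ i ∈ range k, sepCount Pts (q i) (q (i + 1)) = ∑ s ∈ Pts.powersetCard 2,
      #{i ∈ range k | (affineSpan ℝ (s : Set (ℝ × ℝ))).SOppSide (q i) (q (i + 1))} := by
  simp only [sepCount_eq_card_filter]
  exact sum_card_bipartiteAbove_eq_sum_card_bipartiteBelow _

lemma card_sOppSide_add_card_inter_lt_of_tangent {k : ℕ} {q : ℕ → ℝ × ℝ} {v x : ℝ × ℝ}
    (hv : v ∉ (range k).image q) (hx : x ∈ (range k).image q)
    (htangent : ∀ m, orient v x (q m) ≤ 0) :
    #{i ∈ range k | (affineSpan ℝ (({v, x} : Finset _) : Set (ℝ × ℝ))).SOppSide (q i)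
      (q (i + 1))} + #((range k).image q ∩ {v, x}) < 2 := by
  have hvx : v ≠ x := by rintro rfl; exact hv hx
  have hw : {i ∈ range k | (affineSpan ℝ (({v, x} : Finset _) : Set (ℝ × ℝ))).SOppSide (q i)
      (q (i + 1))} = ∅ := by
    refine filter_eq_empty_iff.2 fun i _ hi => ?_
    rw [coe_pair] at hi
    have := orient_mul_orient_neg_of_sOppSide hvx hi
    nlinarith [htangent i, htangent (i + 1)]
  have hinter : (range k).image q ∩ {v, x} = {x} := by
    rw [inter_comm, insert_inter_of_notMem hv, singleton_inter_of_mem hx]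
  rw [hw, hinter, card_empty, card_singleton]
  omega

lemma Function.Periodic.coe_image_range {α : Type*} [DecidableEq α] {k : ℕ} {q : ℕ → α}
    (hq : Function.Periodic q k) (hk : 0 < k) :
    (((range k).image q : Finset α) : Set α) = Set.range q := by
  ext x
  simp only [coe_image, coe_range, Set.mem_image, Set.mem_Iio, Set.mem_range]
  exact ⟨fun ⟨m, _, hm⟩ => ⟨m, hm⟩, fun ⟨m, hm⟩ => ⟨m % k, Nat.mod_lt m hk, hq.map_mod_nat m ▸ hm⟩⟩

section ConvexPolygon

variable {k : ℕ} {q : ℕ → ℝ × ℝ} {ε : ℝ}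
  (hq : Function.Periodic q k)
  (hconv : ∀ c p, 2 ≤ p → p < k → 0 < ε * orient (q c) (q (c + 1)) (q (c + p)))
include hq hconv

lemma orient_pos_of_lt {a b c : ℕ} (hab : a < b) (hbc : b < c) (hca : c < a + k) :
    0 < ε * orient (q a) (q b) (q c) := by
  have edge : ∀ x, a < x → x + 1 < a + k → 0 < ε * orient (q a) (q x) (q (x + 1)) := by
    intro x hax hxa
    have := hconv x (a + k - x) (by omega) (by omega)
    rwa [show x + (a + k - x) = a + k by omega, hq, ← orient_rotate] at this
  have last : ∀ x, a < x → x + 1 < a + k → 0 < ε * orient (q a) (q x) (q (a + k - 1)) := by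
    intro x hax hxa
    have := hconv (a + k - 1) (x + 1 - a) (by omega) (by omega)
    rwa [show a + k - 1 + 1 = a + k by omega, show a + k - 1 + (x + 1 - a) = x + k by omega,
      hq, hq, orient_rotate] at this
  induction c, hbc using Nat.le_induction with
  | base => exact edge b hab hca
  | succ c hbc ih =>
    rcases eq_or_lt_of_le (show c + 2 ≤ a + k by omega) with h | h
    · rw [show c + 1 = a + k - 1 by omega]
      exact last b hab (by omega)
    -- Grassmann–Plücker relation among the directions from `q a`
    have plucker : ε * orient (q a) (q c) (q (a + k - 1)) * (ε * orient (q a) (q b) (q (c + 1))) =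
        ε * orient (q a) (q c) (q (c + 1)) * (ε * orient (q a) (q b) (q (a + k - 1))) +
          ε * orient (q a) (q b) (q c) * (ε * orient (q a) (q (c + 1)) (q (a + k - 1))) := by
      simp only [orient, cross, Prod.fst_sub, Prod.snd_sub]; ring
    refine pos_of_mul_pos_right (plucker ▸ ?_) (last c (by omega) (by omega)).le
    exact add_pos (mul_pos (edge c (by omega) (by omega)) (last b hab (by omega)))
      (mul_pos (ih (by omega)) (last (c + 1) (by omega) h))

lemma noCyclicAlternation_orient (R S : ℝ × ℝ) :
    NoCyclicAlternation k (fun m => orient R S (q m)) := by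
  intro a b c d hab hbc hcd hda ha hb hc hd
  have h₁ := orient_pos_of_lt hq hconv hbc hcd (by omega : d < b + k)
  have h₂ := orient_pos_of_lt hq hconv (hab.trans hbc) hcd hda
  have h₃ := orient_pos_of_lt hq hconv hab (hbc.trans hcd) hda
  have h₄ := orient_pos_of_lt hq hconv hab hbc (by omega : c < a + k)
  -- `orient R S` is affine, so its values at four points satisfy this linear relation
  have key : orient R S (q a) * (ε * orient (q b) (q c) (q d)) +
      orient R S (q c) * (ε * orient (q a) (q b) (q d)) =
      orient R S (q b) * (ε * orient (q a) (q c) (q d)) +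
      orient R S (q d) * (ε * orient (q a) (q b) (q c)) := by
    simp only [orient, cross, Prod.fst_sub, Prod.snd_sub]; ring
  have t₁ := mul_nonneg ha h₁.le
  have t₂ := mul_nonpos_of_nonpos_of_nonneg hb h₂.le
  have t₃ := mul_nonneg hc h₃.le
  have t₄ := mul_nonpos_of_nonpos_of_nonneg hd h₄.le
  refine ⟨(mul_eq_zero.1 ?_).resolve_right h₁.ne', (mul_eq_zero.1 ?_).resolve_right h₂.ne',
    (mul_eq_zero.1 ?_).resolve_right h₃.ne', (mul_eq_zero.1 ?_).resolve_right h₄.ne'⟩ <;> linarith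

lemma card_sOppSide_add_card_inter_le {s : Finset (ℝ × ℝ)} (hs : #s = 2) :
    #{i ∈ range k | (affineSpan ℝ (s : Set (ℝ × ℝ))).SOppSide (q i) (q (i + 1))} +
      #((range k).image q ∩ s) ≤ 2 := by
  obtain ⟨R, S, hRS, rfl⟩ := card_eq_two.1 hs
  set g : ℕ → ℝ := fun m => orient R S (q m)
  have hper : Function.Periodic g k := fun m => by simp only [g, hq m]
  have hg := noCyclicAlternation_orient hq hconv R S
  have hsub : {i ∈ range k | (affineSpan ℝ (({R, S} : Finset _) : Set (ℝ × ℝ))).SOppSide (q i)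
      (q (i + 1))} ⊆ signChanges k g := by
    intro i
    simp only [mem_filter, mem_range, coe_pair, mem_signChanges]
    exact fun ⟨hi, h⟩ => ⟨hi, orient_mul_orient_neg_of_sOppSide hRS h⟩
  have hzero : ∀ x ∈ (range k).image q ∩ {R, S}, ∃ m < k, q m = x ∧ g m = 0 := by
    intro x hx
    obtain ⟨⟨m, hm, rfl⟩, hx⟩ := by simpa only [mem_inter, mem_image, mem_range] using hx
    refine ⟨m, hm, rfl, ?_⟩
    rcases mem_insert.1 hx with h | h
    · simp only [g, h, orient_self_left]
    · simp only [g, mem_singleton.1 h, orient_self_right]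
  refine (Nat.add_le_add_right (card_le_card hsub) _).trans ?_
  have hcard : #((range k).image q ∩ {R, S}) ≤ 2 :=
    (card_le_card inter_subset_right).trans card_le_two
  interval_cases h : #((range k).image q ∩ {R, S})
  · simpa using card_signChanges_le_two hper hg
  · obtain ⟨x, hx⟩ := card_eq_one.1 h
    obtain ⟨m, -, -, hm⟩ := hzero x (hx ▸ mem_singleton_self x)
    have := card_signChanges_le_one hper hg hm
    omega
  · have hRS' : (range k).image q ∩ {R, S} = {R, S} :=
      eq_of_subset_of_card_le inter_subset_right (h ▸ card_le_two)
    obtain ⟨m, hm, rfl, hgm⟩ := hzero R (by simp [hRS'])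
    obtain ⟨m', hm', rfl, hgm'⟩ := hzero S (by simp [hRS'])
    rcases lt_or_gt_of_ne (fun h => hRS (congrArg q h)) with hlt | hlt
    · simp [signChanges_eq_empty hper hg hgm hgm' hlt (by omega)]
    · simp [signChanges_eq_empty hper hg hgm' hgm hlt (by omega)]

theorem sum_sepCount_lt {Pts : Finset (ℝ × ℝ)} {v : ℝ × ℝ} (hk : 0 < k)
    (hinj : Set.InjOn q (Set.Iio k)) (hqPts : ∀ m, q m ∈ Pts) (hv : v ∈ Pts)
    (hvq : v ∉ convexHull ℝ (Set.range q)) :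
    ∑ i ∈ range k, (sepCount Pts (q i) (q (i + 1)) : ℤ) <
      (#Pts : ℤ) ^ 2 - (k + 1) * #Pts + k := by
  set C := (range k).image q
  have hC : (C : Set (ℝ × ℝ)) = Set.range q := hq.coe_image_range hk
  have hCcard : #C = k := by rw [card_image_of_injOn (by simpa using hinj), card_range]
  have hCPts : C ⊆ Pts := by simpa [C, image_subset_iff] using fun m _ => hqPts m
  obtain ⟨x, hxC, hx⟩ := exists_orient_nonpos_of_notMem_convexHull (by simpa [C] using hk.ne')
    (hC ▸ hvq)
  have hvC : v ∉ C := fun h => hvq (hC ▸ subset_convexHull ℝ _ (mem_coe.2 h))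
  have hvx : v ≠ x := by rintro rfl; exact hvC hxC
  have hs₀ : {v, x} ∈ Pts.powersetCard 2 :=
    mem_powersetCard.2 ⟨insert_subset hv (singleton_subset_iff.2 (hCPts hxC)), card_pair hvx⟩
  have hlt := sum_lt_sum (fun s hs => card_sOppSide_add_card_inter_le hq hconv
    (mem_powersetCard.1 hs).2) ⟨_, hs₀, card_sOppSide_add_card_inter_lt_of_tangent hvC hxC
      fun m => hx _ (by rw [← mem_coe, hC]; exact ⟨m, rfl⟩)⟩
  have hpairs : ∑ s ∈ Pts.powersetCard 2, 2 = #Pts * (#Pts - 1) := by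
    rw [← sum_card_inter_powersetCard_two (subset_refl Pts)]
    refine sum_congr rfl fun s hs => ?_
    rw [inter_eq_right.2 (mem_powersetCard.1 hs).1, (mem_powersetCard.1 hs).2]
  rw [sum_add_distrib, sum_card_inter_powersetCard_two hCPts, hCcard, hpairs,
    ← sum_sepCount_eq_sum_card_sOppSide] at hlt
  have hn : 1 ≤ #Pts := card_pos.2 ⟨v, hv⟩
  zify [hn] at hlt
  linarith

end ConvexPolygon

lemma exists_orient_pos_of_forall_edge_sameSide {k : ℕ} {q : ℕ → ℝ × ℝ} (hk : 3 ≤ k)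
    (hq : Function.Periodic q k)
    (hside : ∀ c p p', 2 ≤ p → p < k → 2 ≤ p' → p' < k →
      0 < orient (q c) (q (c + 1)) (q (c + p)) * orient (q c) (q (c + 1)) (q (c + p'))) :
    ∃ ε : ℝ, ∀ c p, 2 ≤ p → p < k → 0 < ε * orient (q c) (q (c + 1)) (q (c + p)) := by
  refine ⟨orient (q 0) (q 1) (q 2), fun c p hp hpk => ?_⟩
  have consecutive : ∀ c, 0 < orient (q 0) (q 1) (q 2) * orient (q c) (q (c + 1)) (q (c + 2)) := by
    intro c
    induction c with
    | zero => simpa using hside 0 2 2 le_rfl (by omega) le_rfl (by omega)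
    | succ c ih =>
      -- the edge `(c + 1, c + 2)` sees `q c` and `q (c + 3)` on the same side
      have := hside (c + 1) (k - 1) 2 (by omega) (by omega) le_rfl (by omega)
      rw [show c + 1 + (k - 1) = c + k by omega, hq, ← orient_rotate] at this
      exact mul_pos_of_mul_pos_of_mul_pos ih this
  exact mul_pos_of_mul_pos_of_mul_pos (consecutive c) (hside c 2 p le_rfl (by omega) hp hpk)

lemma IsConvexCycle.orient_mul_orient_pos {k : ℕ} {Q : ZMod k → ℝ × ℝ}
    (hQ : IsConvexCycle k (Set.range Q) Q) (c p p' : ℕ) (hp : 2 ≤ p) (hpk : p < k) (hp' : 2 ≤ p')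
    (hp'k : p' < k) :
    0 < orient (Q c) (Q (c + 1 : ℕ)) (Q (c + p : ℕ)) *
      orient (Q c) (Q (c + 1 : ℕ)) (Q (c + p' : ℕ)) := by
  obtain ⟨hinj, -, hside⟩ := hQ
  have hne : ∀ a r : ℕ, 0 < r → r < k → Q (a + r : ℕ) ≠ Q a := by
    intro a r hr hrk h
    have := hinj h
    rw [Nat.cast_add, add_eq_left, ZMod.natCast_eq_zero_iff] at this
    exact absurd (Nat.le_of_dvd hr this) (by omega)
  have hout : ∀ r, 2 ≤ r → r < k → Q (c + r : ℕ) ∉ ({Q c, Q (c + 1)} : Set (ℝ × ℝ)) := by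
    intro r hr hrk
    have := hne (c + 1) (r - 1) (by omega) (by omega)
    rw [show c + 1 + (r - 1) = c + r by omega, Nat.cast_succ] at this
    simp only [Set.mem_insert_iff, Set.mem_singleton_iff, not_or]
    exact ⟨hne c r (by omega) hrk, this⟩
  have hedge : Q c ≠ Q (c + 1) := by simpa [eq_comm] using hne c 1 one_pos (by omega)
  rw [Nat.cast_succ]
  exact orient_mul_orient_pos_of_sSameSide hedge
    (hside c _ ⟨_, rfl⟩ _ ⟨_, rfl⟩ (hout p hp hpk) (hout p' hp' hp'k))

lemma convexHull_hullVertices (Pts : Finset (ℝ × ℝ)) :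
    convexHull ℝ (hullVertices Pts) = convexHull ℝ ↑Pts := by
  have hfin : (hullVertices Pts).Finite := Pts.finite_toSet.subset extremePoints_convexHull_subset
  conv_rhs => rw [← closure_convexHull_extremePoints (Pts.finite_toSet.isCompact_convexHull ℝ)
    (convex_convexHull ℝ _)]
  exact (hfin.isClosed_convexHull ℝ).closure_eq.symm

lemma GenPos.three_le_ncard_hullVertices {Pts : Finset (ℝ × ℝ)} (hgen : GenPos Pts)
    (hlt : (hullVertices Pts).ncard < #Pts) : 3 ≤ (hullVertices Pts).ncard := by
  by_contra! h
  have hfin : (hullVertices Pts).Finite := Pts.finite_toSet.subset extremePoints_convexHull_subset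
  have hsub : ↑Pts ⊆ convexHull ℝ (hullVertices Pts) :=
    (convexHull_hullVertices Pts).symm ▸ subset_convexHull ℝ _
  rcases Nat.lt_or_ge (hullVertices Pts).ncard 2 with h1 | h2
  · have hV : (hullVertices Pts).Subsingleton := (Set.ncard_le_one hfin).1 (by omega)
    rw [hV.convex.convexHull_eq] at hsub
    have := Set.ncard_le_ncard hsub hfin
    rw [Set.ncard_coe_finset] at this
    omega
  · obtain ⟨v, w, -, hvw⟩ := Set.ncard_eq_two.1 (by omega : (hullVertices Pts).ncard = 2)
    have hline : ∀ x ∈ Pts, x ∈ line[ℝ, v, w] := fun x hx =>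
      convexHull_subset_affineSpan _ (hvw ▸ hsub hx)
    obtain ⟨A, B, C, hA, hB, hC, hAB, hAC, hBC⟩ := two_lt_card_iff.1 (by omega : 2 < #Pts)
    exact hgen A hA B hB C hC hAB hAC hBC
      (collinear_triple_of_mem_affineSpan_pair (hline A hA) (hline B hB) (hline C hC))

lemma ZMod.injOn_Iio_comp_natCast {α : Type*} {k : ℕ} {Q : ZMod k → α}
    (hQ : Function.Injective Q) : Set.InjOn (fun m : ℕ => Q m) (Set.Iio k) := fun a ha b hb h => by
  have := (ZMod.natCast_eq_natCast_iff' a b k).1 (hQ h)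
  rwa [Nat.mod_eq_of_lt ha, Nat.mod_eq_of_lt hb] at this

lemma notMem_convexHull_of_mem_extremePoints {E : Type*} [AddCommGroup E] [Module ℝ E]
    {A B : Set E} {v : E} (hv : v ∈ (convexHull ℝ A).extremePoints ℝ) (hBA : B ⊆ A) (hvB : v ∉ B) :
    v ∉ convexHull ℝ B := fun h => hvB (extremePoints_convexHull_subset
  (inter_extremePoints_subset_extremePoints_of_subset (convexHull_mono hBA) ⟨h, hv⟩))

/-- If the convex hull of a configuration of `n` points in general position has size `k`,
and `Q` lists `k` points of the configuration in convex position, in their cyclic order,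
which are not exactly the hull vertices, then the cyclic sum of the numbers of separating
lines is strictly less than `n² - (k+1)n + k`. -/
theorem sepCount_cyclic_sum_lt_of_not_hull (n k : ℕ) (Pts : Finset (ℝ × ℝ))
    (hgen : GenPos Pts) (hcard : Pts.card = n)
    (hk : (hullVertices Pts).ncard = k)
    (Q : ZMod k → ℝ × ℝ) (hQmem : ∀ i, Q i ∈ Pts)
    (hconv : IsConvexCycle k (Set.range Q) Q)
    (hnot : Set.range Q ≠ hullVertices Pts) :
    (∑ i ∈ Finset.range k, (sepCount Pts (Q i) (Q (i + 1)) : ℤ))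
      < (n : ℤ)^2 - (k + 1) * n + k := by
  have hQPts : Set.range Q ⊆ ↑Pts := Set.range_subset_iff.2 hQmem
  have hrange : (Set.range Q).ncard = k := by
    rw [← Nat.card_coe_set_eq, Nat.card_range_of_injective hconv.1, Nat.card_zmod]
  obtain ⟨v, hv, hvQ⟩ : ∃ v ∈ hullVertices Pts, v ∉ Set.range Q := by
    by_contra! h
    exact hnot (Set.eq_of_subset_of_ncard_le h (by omega) (Pts.finite_toSet.subset hQPts)).symm
  have hvPts : v ∈ Pts := extremePoints_convexHull_subset hv
  have hkn : k < n := by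
    have := Set.ncard_lt_ncard (hQPts.ssubset_of_not_subset fun h => hvQ (h hvPts))
      Pts.finite_toSet
    rwa [hrange, Set.ncard_coe_finset, hcard] at this
  have hk3 : 3 ≤ k := hk ▸ hgen.three_le_ncard_hullVertices (by omega)
  have : NeZero k := ⟨by omega⟩
  set q : ℕ → ℝ × ℝ := fun m => Q m
  have hq : Function.Periodic q k := fun m => by simp [q]
  obtain ⟨ε, hε⟩ := exists_orient_pos_of_forall_edge_sameSide hk3 hq hconv.orient_mul_orient_pos
  have hvq : v ∉ convexHull ℝ (Set.range q) := by
    change v ∉ convexHull ℝ (Set.range (Q ∘ Nat.cast))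
    rw [ZMod.natCast_zmod_surjective.range_comp]
    exact notMem_convexHull_of_mem_extremePoints hv hQPts hvQ
  simpa [q, hcard] using sum_sepCount_lt hq hε (by omega) (ZMod.injOn_Iio_comp_natCast hconv.1)
    (fun m => hQmem _) hvPts hvq

end
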